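/- arXiv:2602.10463 — 3 statements merged into one kernel-verified Lean document; each statement's English description precedes it below -/
import Mathlib

section
/- Let a, b, θ be real numbers with a ≥ b > 0 and 1 < θ ≤ 2. Then (a+b)^θ ≥ a^θ + θ·b^θ. -/
/-!
Writing `a + b = a (1 + b/a)`, Bernoulli's inequality `(1 + t)^θ ≥ 1 + θ t` gives the tangent-line
bound `(a + b)^θ ≥ a^θ + θ a^(θ-1) b`, and `a^(θ-1) b ≥ b^(θ-1) b = b^θ` because `a ≥ b` and `θ ≥ 1`.
-/

namespace Real

theorem rpow_add_mul_rpow_sub_one_mul_le_add_rpow {a b θ : ℝ} (ha : 0 < a) (hab : -a ≤ b)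
    (hθ : 1 ≤ θ) : a ^ θ + θ * (a ^ (θ - 1) * b) ≤ (a + b) ^ θ := by
  have hba : -1 ≤ b / a := by rw [le_div_iff₀ ha]; linarith
  have bernoulli : 1 + θ * (b / a) ≤ (1 + b / a) ^ θ := one_add_mul_self_le_rpow_one_add hba hθ
  calc a ^ θ + θ * (a ^ (θ - 1) * b) = a ^ θ * (1 + θ * (b / a)) := by
        rw [rpow_sub_one ha.ne']
        field_simp
    _ ≤ a ^ θ * (1 + b / a) ^ θ := by gcongr
    _ = (a + b) ^ θ := by
        rw [← mul_rpow ha.le (by linarith)]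
        field_simp

theorem rpow_le_rpow_sub_one_mul {a b θ : ℝ} (hb : 0 < b) (hab : b ≤ a) (hθ : 1 ≤ θ) :
    b ^ θ ≤ a ^ (θ - 1) * b :=
  calc b ^ θ = b ^ (θ - 1) * b := by rw [rpow_sub_one hb.ne', div_mul_cancel₀ _ hb.ne']
    _ ≤ a ^ (θ - 1) * b := by gcongr

end Real

theorem rpow_add_ge_rpow_add_mul_rpow_general (a b θ : ℝ) (hab : a ≥ b) (hb : 0 < b)
    (hθ1 : 1 < θ) :
    (a + b) ^ θ ≥ a ^ θ + θ * b ^ θ :=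
  calc a ^ θ + θ * b ^ θ ≤ a ^ θ + θ * (a ^ (θ - 1) * b) := by
        gcongr
        exact Real.rpow_le_rpow_sub_one_mul hb hab hθ1.le
    _ ≤ (a + b) ^ θ :=
        Real.rpow_add_mul_rpow_sub_one_mul_le_add_rpow (hb.trans_le hab) (by linarith) hθ1.le

/-- Let `a, b, θ` be real numbers with `a ≥ b > 0` and `1 < θ ≤ 2`.
Then `(a+b)^θ ≥ a^θ + θ·b^θ`, where powers are real powers. -/
theorem rpow_add_ge_rpow_add_mul_rpow (a b θ : ℝ) (hab : a ≥ b) (hb : 0 < b)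
    (hθ1 : 1 < θ) (hθ2 : θ ≤ 2) :
    (a + b) ^ θ ≥ a ^ θ + θ * b ^ θ :=
  rpow_add_ge_rpow_add_mul_rpow_general a b θ hab hb hθ1
end

section
/- Let Ω ⊂ ℝ^N be a bounded convex open set, s ∈ (1/2, 1), δ(x) = dist(x,∂Ω), d_ν(x) = inf{|t| : x+tν ∉ Ω}, and dω the normalized measure on S^{N−1}. Then for every x ∈ Ω, ∫_{S^{N−1}} d_ν(x)^{−2s} dω(ν) ≥ [Γ(N/2)Γ((1+2s)/2)/(√π Γ((N+2s)/2))] · δ(x)^{−2s}. -/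
/-!
Let `e` be the unit normal of a hyperplane supporting `Ω` at a boundary point nearest to `x`.
Then `Ω` lies in the half-space `⟪e, z - x⟫ < δ(x)`, so in every direction `ν` the line through
`x` leaves `Ω` within distance `δ(x) / |⟪e, ν⟫|`, i.e. `d_ν(x)^(-2s) ≥ δ(x)^(-2s) |⟪e, ν⟫|^(2s)`.
It remains to average `|⟪e, ν⟫|^p` over the sphere. Computing `∫ |⟪e, x⟫|^p exp (-‖x‖²) dx`
once in Cartesian coordinates (after rotating `e` to a basis vector it is a product of
one-dimensional Gamma integrals) and once in polar coordinates gives the sphere integral, and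
the case `p = 0` gives the total mass of the sphere.
-/

open MeasureTheory Real Set Metric Topology
open scoped RealInnerProductSpace

theorem integral_abs_rpow_mul_exp_neg_sq {p : ℝ} (hp : -1 < p) :
    ∫ t : ℝ, |t| ^ p * exp (-t ^ 2) = Gamma ((p + 1) / 2) := by
  have hhalf := integral_rpow_mul_exp_neg_rpow two_pos hp
  simp only [rpow_two] at hhalf
  have hfull := integral_comp_abs (f := fun r : ℝ ↦ r ^ p * exp (-r ^ 2))
  simp only [sq_abs, hhalf] at hfull
  rw [hfull]; ring

theorem EuclideanSpace.integral_prod_abs_rpow_mul_exp_neg_norm_sq {ι : Type*} [Fintype ι]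
    {p : ι → ℝ} (hp : ∀ i, -1 < p i) :
    ∫ x : EuclideanSpace ℝ ι, (∏ i, |x i| ^ p i) * exp (-‖x‖ ^ 2)
      = ∏ i, Gamma ((p i + 1) / 2) := by
  have hsplit : ∀ x : EuclideanSpace ℝ ι,
      (∏ i, |x i| ^ p i) * exp (-‖x‖ ^ 2) = ∏ i, |x i| ^ p i * exp (-x i ^ 2) := by
    intro x
    simp only [EuclideanSpace.norm_sq_eq, Real.norm_eq_abs, sq_abs, ← Finset.sum_neg_distrib,
      exp_sum, Finset.prod_mul_distrib]
  simp_rw [hsplit]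
  rw [← (EuclideanSpace.volume_preserving_symm_measurableEquiv_toLp ι).symm.integral_comp
    (MeasurableEquiv.measurableEmbedding _)]
  exact (integral_fintype_prod_volume_eq_prod (𝕜 := ℝ)
    (fun i (t : ℝ) ↦ |t| ^ p i * exp (-t ^ 2))).trans
    (Finset.prod_congr rfl fun i _ ↦ integral_abs_rpow_mul_exp_neg_sq (hp i))

theorem integral_comp_inner_norm_of_norm_eq {E : Type*} [NormedAddCommGroup E]
    [InnerProductSpace ℝ E] [FiniteDimensional ℝ E] [MeasurableSpace E] [BorelSpace E]
    {e e' : E} (h : ‖e‖ = ‖e'‖) (f : ℝ → ℝ → ℝ) :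
    ∫ x, f ⟪e, x⟫ ‖x‖ = ∫ x, f ⟪e', x⟫ ‖x‖ := by
  set ρ := (ℝ ∙ (e - e'))ᗮ.reflection
  have hρ : ρ e = e' := Submodule.reflection_sub h
  rw [← ρ.measurePreserving.integral_comp ρ.toHomeomorph.measurableEmbedding]
  congr with x
  rw [← hρ, ← ρ.inner_map_map (ρ e) x, Submodule.reflection_reflection, ρ.norm_map]

theorem EuclideanSpace.integral_abs_inner_rpow_mul_exp_neg_norm_sq {ι : Type*} [Fintype ι]
    {e : EuclideanSpace ℝ ι} (he : ‖e‖ = 1) {p : ℝ} (hp : -1 < p) :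
    ∫ x : EuclideanSpace ℝ ι, |⟪e, x⟫| ^ p * exp (-‖x‖ ^ 2)
      = Gamma ((p + 1) / 2) * √π ^ (Fintype.card ι - 1) := by
  classical
  obtain ⟨i⟩ : Nonempty ι := by
    by_contra hι
    rw [not_nonempty_iff] at hι
    simp [Subsingleton.elim e 0] at he
  rw [integral_comp_inner_norm_of_norm_eq (e' := EuclideanSpace.single i 1) (by simpa using he)
    (fun c r ↦ |c| ^ p * exp (-r ^ 2))]
  have hp' : ∀ j, -1 < Pi.single (M := fun _ ↦ ℝ) i p j := fun j ↦ by
    rcases eq_or_ne j i with rfl | hj <;> simp [*]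
  convert EuclideanSpace.integral_prod_abs_rpow_mul_exp_neg_norm_sq hp' using 1
  · congr with x
    rw [Fintype.prod_eq_single i fun j hj ↦ by simp [hj]]
    simp [EuclideanSpace.inner_single_left]
  · have hrest : ∀ j ∈ ({i}ᶜ : Finset ι),
        Gamma ((Pi.single (M := fun _ ↦ ℝ) i p j + 1) / 2) = √π := by
      intro j hj
      have hji : j ≠ i := by simpa using hj
      simp [hji, -one_div, Gamma_one_half_eq]
    rw [Fintype.prod_eq_mul_prod_compl i, Finset.prod_congr rfl hrest, Finset.prod_const,
      Finset.card_compl, Finset.card_singleton, Pi.single_eq_same]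

theorem integral_volumeIoiPow_rpow_mul_exp_neg_sq (n : ℕ) {p : ℝ} (hp : -1 < n + p) :
    ∫ r : Ioi (0 : ℝ), (r : ℝ) ^ p * exp (-(r : ℝ) ^ 2) ∂(Measure.volumeIoiPow n)
      = Gamma ((n + p + 1) / 2) / 2 := by
  simp only [Measure.volumeIoiPow, ENNReal.ofReal]
  rw [integral_withDensity_eq_integral_smul ((measurable_subtype_coe.pow_const _).real_toNNReal),
    integral_subtype_comap measurableSet_Ioi
      (fun r : ℝ ↦ (r ^ n).toNNReal • (r ^ p * exp (-r ^ 2)))]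
  have hdensity : ∀ r ∈ Ioi (0 : ℝ),
      (r ^ n).toNNReal • (r ^ p * exp (-r ^ 2)) = r ^ ((n : ℝ) + p) * exp (-r ^ (2 : ℝ)) := by
    intro r hr
    rw [NNReal.smul_def, Real.coe_toNNReal _ (pow_nonneg (le_of_lt hr) _), smul_eq_mul,
      rpow_add hr, rpow_natCast, rpow_two]
    ring
  rw [setIntegral_congr_fun measurableSet_Ioi hdensity,
    integral_rpow_mul_exp_neg_rpow two_pos hp]
  ring_nf

theorem integral_mul_exp_neg_norm_sq_of_homogeneous {E : Type*} [NormedAddCommGroup E]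
    [NormedSpace ℝ E] [FiniteDimensional ℝ E] [MeasurableSpace E] [BorelSpace E] [Nontrivial E]
    (μ : Measure E) [μ.IsAddHaarMeasure] {f : E → ℝ} {p : ℝ}
    (hf : ∀ r : ℝ, 0 < r → ∀ x, f (r • x) = r ^ p * f x)
    (hp : -(Module.finrank ℝ E : ℝ) < p) :
    ∫ x, f x * exp (-‖x‖ ^ 2) ∂μ
      = (∫ ν : sphere (0 : E) 1, f ν ∂μ.toSphere) * (Gamma ((Module.finrank ℝ E + p) / 2) / 2) := by
  have hdim : 1 ≤ Module.finrank ℝ E := Module.finrank_pos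
  have hcast : ((Module.finrank ℝ E - 1 : ℕ) : ℝ) = Module.finrank ℝ E - 1 := by
    rw [Nat.cast_sub hdim, Nat.cast_one]
  calc ∫ x, f x * exp (-‖x‖ ^ 2) ∂μ
      = ∫ x : ({0}ᶜ : Set E), f x * exp (-‖(x : E)‖ ^ 2) ∂(μ.comap (↑)) := by
        rw [integral_subtype_comap (measurableSet_singleton 0).compl
          (fun x : E ↦ f x * exp (-‖x‖ ^ 2)), restrict_compl_singleton]
    _ = ∫ z, f z.1 * ((z.2 : ℝ) ^ p * exp (-(z.2 : ℝ) ^ 2))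
          ∂(μ.toSphere.prod (Measure.volumeIoiPow (Module.finrank ℝ E - 1))) := by
        rw [← μ.measurePreserving_homeomorphUnitSphereProd.integral_comp
          (Homeomorph.measurableEmbedding _)]
        congr with x
        have hx : 0 < ‖(x : E)‖ := norm_pos_iff.mpr x.2
        have hfx : f x = ‖(x : E)‖ ^ p * f (‖(x : E)‖⁻¹ • (x : E)) := by
          rw [← hf _ hx, smul_inv_smul₀ hx.ne']
        rw [hfx]
        simp only [homeomorphUnitSphereProd_apply_fst_coe, homeomorphUnitSphereProd_apply_snd_coe]
        ring
    _ = (∫ ν : sphere (0 : E) 1, f ν ∂μ.toSphere)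
          * (Gamma ((Module.finrank ℝ E + p) / 2) / 2) := by
        rw [integral_prod_mul (fun ν : sphere (0 : E) 1 ↦ f ν)
          (fun r : Ioi (0 : ℝ) ↦ (r : ℝ) ^ p * exp (-(r : ℝ) ^ 2)),
          integral_volumeIoiPow_rpow_mul_exp_neg_sq _ (by rw [hcast]; linarith), hcast]
        ring_nf

theorem EuclideanSpace.average_abs_inner_rpow_toSphere {ι : Type*} [Fintype ι]
    {e : EuclideanSpace ℝ ι} (he : ‖e‖ = 1) {p : ℝ} (hp : -1 < p) :
    ⨍ ν : sphere (0 : EuclideanSpace ℝ ι) 1, |⟪e, (ν : EuclideanSpace ℝ ι)⟫| ^ p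
        ∂(volume : Measure (EuclideanSpace ℝ ι)).toSphere
      = Gamma (Fintype.card ι / 2) * Gamma ((p + 1) / 2)
          / (√π * Gamma ((Fintype.card ι + p) / 2)) := by
  have : Nontrivial (EuclideanSpace ℝ ι) := nontrivial_of_ne e 0 (by rintro rfl; simp at he)
  set σ := (volume : Measure (EuclideanSpace ℝ ι)).toSphere
  set n := Fintype.card ι
  have hn : (1 : ℝ) ≤ n := by
    have := Module.finrank_pos (R := ℝ) (M := EuclideanSpace ℝ ι)
    rw [finrank_euclideanSpace] at this
    exact_mod_cast this
  have hmoment : ∀ q : ℝ, -1 < q → Gamma ((q + 1) / 2) * √π ^ (n - 1)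
      = (∫ ν : sphere (0 : EuclideanSpace ℝ ι) 1, |⟪e, (ν : EuclideanSpace ℝ ι)⟫| ^ q ∂σ)
        * (Gamma ((n + q) / 2) / 2) := by
    intro q hq
    rw [← EuclideanSpace.integral_abs_inner_rpow_mul_exp_neg_norm_sq he hq,
      integral_mul_exp_neg_norm_sq_of_homogeneous volume (f := fun x ↦ |⟪e, x⟫| ^ q) ?_ ?_,
      finrank_euclideanSpace]
    · intro r hr x
      rw [inner_smul_right, abs_mul, abs_of_pos hr, mul_rpow hr.le (abs_nonneg _)]
    · rw [finrank_euclideanSpace]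
      linarith
  have hmass := hmoment 0 (by norm_num)
  simp only [rpow_zero, integral_const, smul_eq_mul, mul_one, zero_add, add_zero,
    Gamma_one_half_eq] at hmass
  have hΓ : 0 < Gamma ((n + p) / 2) := Gamma_pos_of_pos (by linarith)
  have hM : σ.real univ ≠ 0 := by
    rintro h
    rw [h, zero_mul] at hmass
    exact (by positivity : 0 < √π * √π ^ (n - 1)).ne' hmass
  rw [average_eq, smul_eq_mul]
  field_simp
  linear_combination (-2 * √π) * hmoment p hp + (2 * Gamma ((p + 1) / 2)) * hmass

theorem smul_notMem_iff_inv_gauge_le {E : Type*} [NormedAddCommGroup E] [NormedSpace ℝ E]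
    {K : Set E} (hKo : IsOpen K) (hKc : Convex ℝ K) (hK0 : (0 : E) ∈ K) {v : E}
    (hv : 0 < gauge K v) {t : ℝ} (ht : 0 ≤ t) :
    t • v ∉ K ↔ (gauge K v)⁻¹ ≤ t := by
  rw [← Set.ext_iff.mp (setOfPred_gauge_lt_one_eq_self_of_isOpen hKc hK0 hKo), mem_ofPred_eq,
    not_lt, gauge_smul_of_nonneg ht, smul_eq_mul, inv_le_iff_one_le_mul₀ hv]

/-- The paper's `d_v(x)`. When the line `x + ℝ v` stays in `Ω` the set is empty and the value
is the junk `sInf ∅ = 0`. -/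
noncomputable def directionalDist {E : Type*} [AddCommGroup E] [Module ℝ E] (Ω : Set E)
    (x v : E) : ℝ :=
  sInf {r : ℝ | ∃ t : ℝ, r = |t| ∧ x + t • v ∉ Ω}

section directionalDist

variable {E : Type*} [NormedAddCommGroup E] [NormedSpace ℝ E] {Ω : Set E} {x v : E}

theorem directionalDist_le_abs {t : ℝ} (h : x + t • v ∉ Ω) : directionalDist Ω x v ≤ |t| :=
  csInf_le ⟨0, by rintro _ ⟨t, rfl, -⟩; exact abs_nonneg t⟩ ⟨t, rfl, h⟩

theorem gauge_preimage_add_pos (hΩo : IsOpen Ω) (hΩb : Bornology.IsBounded Ω) (hx : x ∈ Ω)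
    (hv : v ≠ 0) : 0 < gauge ((x + ·) ⁻¹' Ω) v := by
  have hK0 : (0 : E) ∈ (x + ·) ⁻¹' Ω := by simpa using hx
  refine (gauge_pos (absorbent_nhds_zero ((hΩo.preimage (continuous_const_add x)).mem_nhds hK0))
    ?_).mpr hv
  rw [NormedSpace.isVonNBounded_iff]
  exact (isometry_add_left x).antilipschitz.isBounded_preimage hΩb

theorem directionalDist_eq_min_inv_gauge (hΩo : IsOpen Ω) (hΩc : Convex ℝ Ω)
    (hΩb : Bornology.IsBounded Ω) (hx : x ∈ Ω) (hv : v ≠ 0) :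
    directionalDist Ω x v
      = min (gauge ((x + ·) ⁻¹' Ω) v)⁻¹ (gauge ((x + ·) ⁻¹' Ω) (-v))⁻¹ := by
  set K := (x + ·) ⁻¹' Ω
  have hray : ∀ w : E, w ≠ 0 → ∀ r : ℝ, 0 ≤ r → (x + r • w ∉ Ω ↔ (gauge K w)⁻¹ ≤ r) :=
    fun w hw r hr ↦ smul_notMem_iff_inv_gauge_le (hΩo.preimage (continuous_const_add x))
      (hΩc.translate_preimage_right x) (by simpa [K] using hx)
      (gauge_preimage_add_pos hΩo hΩb hx hw) hr
  have hv' : -v ≠ 0 := neg_ne_zero.mpr hv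
  have hset : {r : ℝ | ∃ t : ℝ, r = |t| ∧ x + t • v ∉ Ω}
      = Ici (min (gauge K v)⁻¹ (gauge K (-v))⁻¹) := by
    ext r
    rw [mem_Ici, min_le_iff]
    constructor
    · rintro ⟨t, rfl, ht⟩
      rcases le_total 0 t with h | h
      · exact .inl ((hray v hv _ (abs_nonneg t)).mp (by rwa [abs_of_nonneg h]))
      · refine .inr ((hray (-v) hv' _ (abs_nonneg t)).mp ?_)
        rwa [abs_of_nonpos h, neg_smul_neg]
    · rintro (h | h)
      · have hr : 0 ≤ r := (inv_pos.mpr (gauge_preimage_add_pos hΩo hΩb hx hv)).le.trans h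
        exact ⟨r, (abs_of_nonneg hr).symm, (hray v hv r hr).mpr h⟩
      · have hr : 0 ≤ r := (inv_pos.mpr (gauge_preimage_add_pos hΩo hΩb hx hv')).le.trans h
        refine ⟨-r, by rw [abs_neg, abs_of_nonneg hr], ?_⟩
        rw [← neg_smul_neg, neg_neg]
        exact (hray (-v) hv' r hr).mpr h
  rw [directionalDist, hset, csInf_Ici]

theorem directionalDist_pos (hΩo : IsOpen Ω) (hΩc : Convex ℝ Ω) (hΩb : Bornology.IsBounded Ω)
    (hx : x ∈ Ω) (hv : v ≠ 0) : 0 < directionalDist Ω x v := by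
  rw [directionalDist_eq_min_inv_gauge hΩo hΩc hΩb hx hv]
  exact lt_min (inv_pos.mpr (gauge_preimage_add_pos hΩo hΩb hx hv))
    (inv_pos.mpr (gauge_preimage_add_pos hΩo hΩb hx (neg_ne_zero.mpr hv)))

theorem continuousOn_directionalDist (hΩo : IsOpen Ω) (hΩc : Convex ℝ Ω)
    (hΩb : Bornology.IsBounded Ω) (hx : x ∈ Ω) : ContinuousOn (directionalDist Ω x) {0}ᶜ := by
  have hK : (x + ·) ⁻¹' Ω ∈ 𝓝 (0 : E) :=
    (hΩo.preimage (continuous_const_add x)).mem_nhds (by simpa using hx : (0 : E) ∈ (x + ·) ⁻¹' Ω)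
  have hgauge := continuous_gauge (hΩc.translate_preimage_right x) hK
  refine ContinuousOn.congr ?_ fun v hv ↦ directionalDist_eq_min_inv_gauge hΩo hΩc hΩb hx hv
  have hne : ∀ v ∈ ({0}ᶜ : Set E), gauge ((x + ·) ⁻¹' Ω) v ≠ 0 :=
    fun v hv ↦ (gauge_preimage_add_pos hΩo hΩb hx hv).ne'
  have hne' : ∀ v ∈ ({0}ᶜ : Set E), gauge ((x + ·) ⁻¹' Ω) (-v) ≠ 0 :=
    fun v hv ↦ (gauge_preimage_add_pos hΩo hΩb hx (neg_ne_zero.mpr hv)).ne'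
  exact ContinuousOn.inf (hgauge.continuousOn.inv₀ hne)
    ((hgauge.comp continuous_neg).continuousOn.inv₀ hne')

end directionalDist

theorem directionalDist_mul_abs_inner_le {E : Type*} [NormedAddCommGroup E]
    [InnerProductSpace ℝ E] {Ω : Set E} {x e : E} {δ : ℝ} (hx : x ∈ Ω)
    (hΩ : ∀ z ∈ Ω, ⟪e, z - x⟫ < δ) (v : E) : directionalDist Ω x v * |⟪e, v⟫| ≤ δ := by
  have hδ : 0 < δ := by simpa using hΩ x hx
  rcases eq_or_ne ⟪e, v⟫ 0 with h | h
  · simpa [h] using hδ.le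
  have hexit : x + (δ / ⟪e, v⟫) • v ∉ Ω := fun hz ↦ by
    simpa [inner_smul_right, div_mul_cancel₀ _ h] using hΩ _ hz
  calc directionalDist Ω x v * |⟪e, v⟫| ≤ |δ / ⟪e, v⟫| * |⟪e, v⟫| := by
        gcongr
        exact directionalDist_le_abs hexit
    _ = δ := by rw [← abs_mul, div_mul_cancel₀ _ h, abs_of_pos hδ]

theorem Convex.exists_norm_eq_one_inner_sub_lt_infDist_frontier {E : Type*}
    [NormedAddCommGroup E] [InnerProductSpace ℝ E] [FiniteDimensional ℝ E] {Ω : Set E}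
    (hΩc : Convex ℝ Ω) (hΩo : IsOpen Ω) (hΩ : Ω ≠ univ) {x : E} (hx : x ∈ Ω) :
    ∃ e : E, ‖e‖ = 1 ∧ ∀ z ∈ Ω, ⟪e, z - x⟫ < infDist x (frontier Ω) := by
  obtain ⟨y, hyf, hyd⟩ := exists_mem_frontier_infDist_compl_eq_dist hx hΩ
  have hfrontier : frontier Ω ⊆ Ωᶜ := by
    rw [hΩo.frontier_eq]
    exact fun z hz ↦ hz.2
  obtain ⟨f, hf⟩ := geometric_hahn_banach_open_point hΩc hΩo (hfrontier hyf)
  set e₀ := (InnerProductSpace.toDual ℝ E).symm f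
  have he₀ : ∀ z, ⟪e₀, z⟫ = f z := fun z ↦ InnerProductSpace.toDual_symm_apply
  have he₀ne : e₀ ≠ 0 := by
    rintro h
    have := hf x hx
    simp only [← he₀, h, inner_zero_left, lt_self_iff_false] at this
  have he : ‖‖e₀‖⁻¹ • e₀‖ = 1 := norm_smul_inv_norm he₀ne
  refine ⟨‖e₀‖⁻¹ • e₀, he, fun z hz ↦ ?_⟩
  calc ⟪‖e₀‖⁻¹ • e₀, z - x⟫ < ⟪‖e₀‖⁻¹ • e₀, y - x⟫ := by
        simp only [real_inner_smul_left, inner_sub_right, he₀]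
        gcongr
        exact hf z hz
    _ ≤ ‖y - x‖ :=
        (real_inner_le_norm _ _).trans_eq (by rw [he, one_mul])
    _ = infDist x Ωᶜ := by rw [hyd, dist_comm, dist_eq_norm]
    _ ≤ infDist x (frontier Ω) := infDist_le_infDist_of_subset hfrontier ⟨y, hyf⟩

theorem rpow_neg_mul_rpow_le_rpow_neg_of_mul_le {c d δ q : ℝ} (hc : 0 ≤ c) (hd : 0 < d)
    (h : d * c ≤ δ) (hq : 0 < q) : δ ^ (-q) * c ^ q ≤ d ^ (-q) := by
  rcases hc.eq_or_lt with rfl | hc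
  · simpa [zero_rpow hq.ne'] using rpow_nonneg hd.le _
  calc δ ^ (-q) * c ^ q ≤ (d * c) ^ (-q) * c ^ q :=
        mul_le_mul_of_nonneg_right (rpow_le_rpow_of_nonpos (by positivity) h (by linarith))
          (by positivity)
    _ = d ^ (-q) := by
        rw [mul_rpow hd.le hc.le, mul_assoc, ← rpow_add hc, neg_add_cancel, rpow_zero, mul_one]

theorem mul_integral_abs_inner_rpow_le_integral_directionalDist_rpow_neg {E : Type*}
    [NormedAddCommGroup E] [InnerProductSpace ℝ E] [FiniteDimensional ℝ E] [MeasurableSpace E]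
    [BorelSpace E] (μ : Measure (sphere (0 : E) 1)) [IsFiniteMeasure μ] {Ω : Set E}
    (hΩo : IsOpen Ω) (hΩc : Convex ℝ Ω) (hΩb : Bornology.IsBounded Ω) {x e : E} {δ q : ℝ}
    (hx : x ∈ Ω) (hΩ : ∀ z ∈ Ω, ⟪e, z - x⟫ < δ) (hq : 0 < q) :
    δ ^ (-q) * ∫ ν, |⟪e, (ν : E)⟫| ^ q ∂μ ≤ ∫ ν, directionalDist Ω x ν ^ (-q) ∂μ := by
  have hν : ∀ ν : sphere (0 : E) 1, (ν : E) ≠ 0 := fun ν ↦ ne_zero_of_mem_unit_sphere ν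
  have hpos := fun ν ↦ directionalDist_pos hΩo hΩc hΩb hx (hν ν)
  have hcont : Continuous fun ν : sphere (0 : E) 1 ↦ directionalDist Ω x ν ^ (-q) :=
    ((continuousOn_directionalDist hΩo hΩc hΩb hx).comp_continuous continuous_subtype_val
      hν).rpow_const fun ν ↦ .inl (hpos ν).ne'
  have hcont' : Continuous fun ν : sphere (0 : E) 1 ↦ δ ^ (-q) * |⟪e, (ν : E)⟫| ^ q :=
    continuous_const.mul (((continuous_const.inner continuous_subtype_val).abs).rpow_const
      fun _ ↦ .inr hq.le)
  rw [← integral_const_mul]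
  exact integral_mono (hcont'.integrable_of_hasCompactSupport (.of_compactSpace _))
    (hcont.integrable_of_hasCompactSupport (.of_compactSpace _)) fun ν ↦
      rpow_neg_mul_rpow_le_rpow_neg_of_mul_le (abs_nonneg _) (hpos ν)
        (directionalDist_mul_abs_inner_le hx hΩ ν) hq

theorem convex_integral_dist_rpow_neg_ge_general (N : ℕ) (hN : 1 ≤ N) (s : ℝ)
    (hs : 1 / 2 < s)
    (Ω : Set (EuclideanSpace ℝ (Fin N))) (hΩopen : IsOpen Ω) (hΩconv : Convex ℝ Ω)
    (hΩbdd : Bornology.IsBounded Ω)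
    (ω : Measure (Metric.sphere (0 : EuclideanSpace ℝ (Fin N)) 1))
    (hω : ω = ((volume : Measure (EuclideanSpace ℝ (Fin N))).toSphere Set.univ)⁻¹ •
      (volume : Measure (EuclideanSpace ℝ (Fin N))).toSphere) :
    ∀ x ∈ Ω,
      ∫ ν : Metric.sphere (0 : EuclideanSpace ℝ (Fin N)) 1,
          (sInf {r : ℝ | ∃ t : ℝ, r = |t| ∧ x + t • (ν : EuclideanSpace ℝ (Fin N)) ∉ Ω})
            ^ (-(2 * s)) ∂ω
        ≥ (Real.Gamma (N / 2) * Real.Gamma ((1 + 2 * s) / 2) /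
            (Real.sqrt Real.pi * Real.Gamma ((N + 2 * s) / 2))) *
            (Metric.infDist x (frontier Ω)) ^ (-(2 * s)) := by
  intro x hx
  have : Nonempty (Fin N) := ⟨⟨0, hN⟩⟩
  have hΩ : Ω ≠ univ := fun h ↦ NormedSpace.unbounded_univ ℝ _ (h ▸ hΩbdd)
  obtain ⟨e, he, hhalf⟩ := hΩconv.exists_norm_eq_one_inner_sub_lt_infDist_frontier hΩopen hΩ hx
  subst hω
  calc _ = infDist x (frontier Ω) ^ (-(2 * s)) * ⨍ ν : sphere (0 : EuclideanSpace ℝ (Fin N)) 1,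
          |⟪e, (ν : EuclideanSpace ℝ (Fin N))⟫| ^ (2 * s) ∂volume.toSphere := by
        rw [EuclideanSpace.average_abs_inner_rpow_toSphere he (by linarith), Fintype.card_fin,
          add_comm (2 * s)]
        ring
    _ ≤ ∫ ν : sphere (0 : EuclideanSpace ℝ (Fin N)) 1, directionalDist Ω x ν ^ (-(2 * s))
          ∂(volume.toSphere univ)⁻¹ • volume.toSphere :=
        mul_integral_abs_inner_rpow_le_integral_directionalDist_rpow_neg _ hΩopen hΩconv hΩbdd hx
          hhalf (by linarith)

/-- For a bounded convex open set `Ω ⊂ ℝ^N`, `s ∈ (1/2,1)`, `δ(x) = dist(x,∂Ω)`,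
`d_ν(x) = inf{|t| : x+tν ∉ Ω}`, and `dω` the normalized surface measure on
`S^{N−1}`: for every `x ∈ Ω`,
`∫ d_ν(x)^{−2s} dω(ν) ≥ [Γ(N/2)Γ((1+2s)/2)/(√π Γ((N+2s)/2))]·δ(x)^{−2s}`. -/
theorem convex_integral_dist_rpow_neg_ge (N : ℕ) (hN : 1 ≤ N) (s : ℝ)
    (hs : 1 / 2 < s) (hs1 : s < 1)
    (Ω : Set (EuclideanSpace ℝ (Fin N))) (hΩopen : IsOpen Ω) (hΩconv : Convex ℝ Ω)
    (hΩbdd : Bornology.IsBounded Ω)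
    (ω : Measure (Metric.sphere (0 : EuclideanSpace ℝ (Fin N)) 1))
    (hω : ω = ((volume : Measure (EuclideanSpace ℝ (Fin N))).toSphere Set.univ)⁻¹ •
      (volume : Measure (EuclideanSpace ℝ (Fin N))).toSphere) :
    ∀ x ∈ Ω,
      ∫ ν : Metric.sphere (0 : EuclideanSpace ℝ (Fin N)) 1,
          (sInf {r : ℝ | ∃ t : ℝ, r = |t| ∧ x + t • (ν : EuclideanSpace ℝ (Fin N)) ∉ Ω})
            ^ (-(2 * s)) ∂ω
        ≥ (Real.Gamma (N / 2) * Real.Gamma ((1 + 2 * s) / 2) /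
            (Real.sqrt Real.pi * Real.Gamma ((N + 2 * s) / 2))) *
            (Metric.infDist x (frontier Ω)) ^ (-(2 * s)) :=
  convex_integral_dist_rpow_neg_ge_general N hN s hs Ω hΩopen hΩconv hΩbdd ω hω
end

section
/- For s ∈ (1/2, 1) and N ≥ 1, let 𝔥_{N,s} = c_{N,s}·κ_{N,2s} where c_{N,s} = 2^{2s}π^{−N/2} s Γ((N+2s)/2)/Γ(1−s) and κ_{N,2s} = π^{(N−1)/2}·[Γ((1+2s)/2)/Γ((N+2s)/2)]·(1/(2s))·[2^{1−2s}Γ(1−s)Γ((1+2s)/2)/√π − 1]. Then 𝔥_{N,s} → 1/4 as s → 1⁻, and 𝔥_{N,s} → 0 as s → (1/2)⁺. -/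
/-!
Cancelling `Γ((N+2s)/2)` and the powers of `π` gives, for `0 < s < 1`,
`𝔥_{N,s} = (Γ(s+1/2)/√π) · (Γ(s+1/2)/√π - 2^{2s-1}/Γ(1-s))`.
Since `1/Γ` is continuous on all of `ℝ` and vanishes at `0`, this expression is continuous on
`(-1/2, ∞)`, so both limits are its values at `1` and `1/2`, namely
`(1/2)·(1/2 - 0) = 1/4` and `(1/√π)·(1/√π - 1/√π) = 0`.
-/

open Real Filter

noncomputable def halfSpaceHardyConstant (N : ℕ) (s : ℝ) : ℝ :=
  (2 ^ (2 * s) * π ^ (-(N : ℝ) / 2) * s * Gamma ((N + 2 * s) / 2) / Gamma (1 - s)) *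
    (π ^ (((N : ℝ) - 1) / 2) * (Gamma ((1 + 2 * s) / 2) / Gamma ((N + 2 * s) / 2)) *
      (1 / (2 * s)) * (2 ^ (1 - 2 * s) * Gamma (1 - s) * Gamma ((1 + 2 * s) / 2) / √π - 1))

noncomputable def reducedHardyConstant (s : ℝ) : ℝ :=
  Gamma (s + 1 / 2) / √π * (Gamma (s + 1 / 2) / √π - 2 ^ (2 * s - 1) * (Gamma (1 - s))⁻¹)

theorem Real.continuous_inv_Gamma : Continuous fun s : ℝ => (Gamma s)⁻¹ := by
  have h : (fun s : ℝ => (Gamma s)⁻¹) = fun s : ℝ => ((Complex.Gamma s)⁻¹).re := by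
    ext s
    rw [Complex.Gamma_ofReal, ← Complex.ofReal_inv, Complex.ofReal_re]
  rw [h]
  exact Complex.continuous_re.comp
    (Complex.differentiable_one_div_Gamma.continuous.comp Complex.continuous_ofReal)

theorem Real.continuousAt_Gamma_of_pos {x : ℝ} (hx : 0 < x) : ContinuousAt Gamma x :=
  (differentiableOn_Gamma_Ioi.differentiableAt (Ioi_mem_nhds hx)).continuousAt

theorem continuousAt_reducedHardyConstant {x : ℝ} (hx : -(1 / 2) < x) :
    ContinuousAt reducedHardyConstant x := by
  have hΓ : ContinuousAt (fun s : ℝ => Gamma (s + 1 / 2)) x :=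
    (continuousAt_Gamma_of_pos (by linarith)).comp (by fun_prop)
  have hpow : ContinuousAt (fun s : ℝ => (2 : ℝ) ^ (2 * s - 1)) x :=
    (continuousAt_const_rpow two_ne_zero).comp (by fun_prop)
  have hinvΓ : ContinuousAt (fun s : ℝ => (Gamma (1 - s))⁻¹) x :=
    (continuous_inv_Gamma.comp (by fun_prop)).continuousAt
  exact (hΓ.div_const _).mul ((hΓ.div_const _).sub (hpow.mul hinvΓ))

theorem reducedHardyConstant_one : reducedHardyConstant 1 = 1 / 4 := by
  have hΓ : Gamma (1 + 1 / 2) = √π / 2 := by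
    rw [add_comm, Gamma_add_one one_half_pos.ne', Gamma_one_half_eq]
    ring
  have hπ : √π ≠ 0 := (sqrt_pos.2 pi_pos).ne'
  rw [reducedHardyConstant, hΓ, sub_self, Gamma_zero, inv_zero, mul_zero, sub_zero,
    div_div_cancel_left' hπ]
  norm_num

theorem reducedHardyConstant_one_half : reducedHardyConstant (1 / 2) = 0 := by
  rw [reducedHardyConstant, add_halves, Gamma_one, show (1 : ℝ) - 1 / 2 = 1 / 2 by norm_num,
    Gamma_one_half_eq]
  norm_num

theorem halfSpaceHardyConstant_eq {N : ℕ} {s : ℝ} (hs0 : 0 < s) (hs1 : s < 1) :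
    halfSpaceHardyConstant N s = reducedHardyConstant s := by
  have hΓN : Gamma ((N + 2 * s) / 2) ≠ 0 := (Gamma_pos_of_pos (by positivity)).ne'
  have hΓ1 : Gamma (1 - s) ≠ 0 := (Gamma_pos_of_pos (by linarith)).ne'
  have hπ : π ^ (-(N : ℝ) / 2) = (√π * π ^ (((N : ℝ) - 1) / 2))⁻¹ := by
    rw [sqrt_eq_rpow, ← rpow_add pi_pos, ← rpow_neg pi_pos.le]
    ring_nf
  have h2 : (2 : ℝ) ^ (2 * s) = 2 * 2 ^ (2 * s - 1) := by
    rw [← rpow_one_add' zero_le_two (by linarith)]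
    ring_nf
  have h2' : (2 : ℝ) ^ (1 - 2 * s) = (2 ^ (2 * s - 1))⁻¹ := by
    rw [← rpow_neg zero_le_two]
    ring_nf
  rw [halfSpaceHardyConstant, reducedHardyConstant, hπ, h2, h2',
    show (1 + 2 * s) / 2 = s + 1 / 2 by ring]
  field_simp

theorem tendsto_halfSpaceHardyConstant (N : ℕ) {a : ℝ} (ha : -(1 / 2) < a) :
    Tendsto (halfSpaceHardyConstant N) (nhdsWithin a (Set.Ioo 0 1))
      (nhds (reducedHardyConstant a)) := by
  refine ((continuousAt_reducedHardyConstant ha).tendsto.mono_left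
    nhdsWithin_le_nhds).congr' ?_
  filter_upwards [self_mem_nhdsWithin] with s hs
  exact (halfSpaceHardyConstant_eq hs.1 hs.2).symm

theorem halfspace_hardy_constant_limits_general (N : ℕ) :
    Tendsto
      (fun s : ℝ =>
        (2 ^ (2 * s) * Real.pi ^ (-(N : ℝ) / 2) * s * Real.Gamma ((N + 2 * s) / 2) /
            Real.Gamma (1 - s)) *
          (Real.pi ^ (((N : ℝ) - 1) / 2) *
            (Real.Gamma ((1 + 2 * s) / 2) / Real.Gamma ((N + 2 * s) / 2)) * (1 / (2 * s)) *
            (2 ^ (1 - 2 * s) * Real.Gamma (1 - s) * Real.Gamma ((1 + 2 * s) / 2) /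
                Real.sqrt Real.pi - 1)))
      (nhdsWithin 1 (Set.Iio 1)) (nhds (1 / 4)) ∧
    Tendsto
      (fun s : ℝ =>
        (2 ^ (2 * s) * Real.pi ^ (-(N : ℝ) / 2) * s * Real.Gamma ((N + 2 * s) / 2) /
            Real.Gamma (1 - s)) *
          (Real.pi ^ (((N : ℝ) - 1) / 2) *
            (Real.Gamma ((1 + 2 * s) / 2) / Real.Gamma ((N + 2 * s) / 2)) * (1 / (2 * s)) *
            (2 ^ (1 - 2 * s) * Real.Gamma (1 - s) * Real.Gamma ((1 + 2 * s) / 2) /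
                Real.sqrt Real.pi - 1)))
      (nhdsWithin (1 / 2) (Set.Ioi (1 / 2))) (nhds 0) := by
  constructor
  · have h := tendsto_halfSpaceHardyConstant N (a := 1) (by norm_num)
    rw [reducedHardyConstant_one] at h
    exact h.mono_left (nhdsWithin_le_of_mem (Ioo_mem_nhdsLT zero_lt_one))
  · have h := tendsto_halfSpaceHardyConstant N (a := 1 / 2) (by norm_num)
    rw [reducedHardyConstant_one_half] at h
    exact h.mono_left (nhdsWithin_le_of_mem (Ioo_mem_nhdsGT_of_mem ⟨one_half_pos.le, one_half_lt_one⟩))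

/-- For `N ≥ 1`, the sharp half-space fractional Hardy constant
`𝔥_{N,s} = c_{N,s}·κ_{N,2s}` (with the explicit Gamma-function formulas)
satisfies `𝔥_{N,s} → 1/4` as `s → 1⁻` and `𝔥_{N,s} → 0` as `s → (1/2)⁺`. -/
theorem halfspace_hardy_constant_limits (N : ℕ) (hN : 1 ≤ N) :
    Tendsto
      (fun s : ℝ =>
        (2 ^ (2 * s) * Real.pi ^ (-(N : ℝ) / 2) * s * Real.Gamma ((N + 2 * s) / 2) /
            Real.Gamma (1 - s)) *
          (Real.pi ^ (((N : ℝ) - 1) / 2) *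
            (Real.Gamma ((1 + 2 * s) / 2) / Real.Gamma ((N + 2 * s) / 2)) * (1 / (2 * s)) *
            (2 ^ (1 - 2 * s) * Real.Gamma (1 - s) * Real.Gamma ((1 + 2 * s) / 2) /
                Real.sqrt Real.pi - 1)))
      (nhdsWithin 1 (Set.Iio 1)) (nhds (1 / 4)) ∧
    Tendsto
      (fun s : ℝ =>
        (2 ^ (2 * s) * Real.pi ^ (-(N : ℝ) / 2) * s * Real.Gamma ((N + 2 * s) / 2) /
            Real.Gamma (1 - s)) *
          (Real.pi ^ (((N : ℝ) - 1) / 2) *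
            (Real.Gamma ((1 + 2 * s) / 2) / Real.Gamma ((N + 2 * s) / 2)) * (1 / (2 * s)) *
            (2 ^ (1 - 2 * s) * Real.Gamma (1 - s) * Real.Gamma ((1 + 2 * s) / 2) /
                Real.sqrt Real.pi - 1)))
      (nhdsWithin (1 / 2) (Set.Ioi (1 / 2))) (nhds 0) :=
  halfspace_hardy_constant_limits_general N
end
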